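/- arXiv:1504.02926 — 8 statements merged into one kernel-verified Lean document; each statement's English description precedes it below -/
import Mathlib

section
/- At any subgame perfect Nash equilibrium of the push model, the IoTSP's equilibrium price equals p_I* = max{5·D_max/(6d) − b·a1/6, 0}; in particular p_I* is unique even when the WSP/CSP equilibrium prices are not, and p_I* = 0 if and only if d·b·a1 ≥ 5·D_max. -/
/-- Push model: the SPNE price of the IoTSP is unique, equal to
max{5·D_max/(6d) − b·a1/6, 0}, and it is 0 iff d·b·a1 ≥ 5·D_max. -/
theorem push_SPNE_iot_price
    (Dmax d b a1 α β a2 pw pc : ℝ)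
    (hDmax : 0 < Dmax) (hd : 0 < d) (hb : 0 < b) (ha1 : 0 < a1)
    (hα : 0 < α) (hβ : 0 < β) (ha2 : 0 < a2)
    (hpw : 0 ≤ pw) (hpc : 0 ≤ pc)
    (heq : (d * b * a1 < 5 * Dmax ∧
              pw * (α+a1) = Dmax/(3*d) + b*a1/3 ∧
              pc * (β+a2) = Dmax/(3*d) + b*a1/3) ∨
           (5 * Dmax ≤ d * b * a1 ∧
              pw * (α+a1) + pc * (β+a2) = b*a1 - Dmax/d))
    (pIstar : ℝ)
    (hpI : pIstar = max (Dmax/(2*d) - b*a1/2 + pw*(α+a1)/2 + pc*(β+a2)/2) 0) :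
    pIstar = max (5*Dmax/(6*d) - b*a1/6) 0 ∧
    (pIstar = 0 ↔ 5 * Dmax ≤ d * b * a1) := by
  have hd' : d ≠ 0 := ne_of_gt hd
  rcases heq with ⟨hlt, hw, hc⟩ | ⟨hge, hsum⟩
  · have hx : Dmax/(2*d) - b*a1/2 + pw*(α+a1)/2 + pc*(β+a2)/2
        = 5*Dmax/(6*d) - b*a1/6 := by
      rw [hw, hc]; field_simp; ring
    have hpos : 0 < 5*Dmax/(6*d) - b*a1/6 := by
      rw [sub_pos, div_lt_div_iff₀ (by norm_num) (by positivity)]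
      nlinarith
    constructor
    · rw [hpI, hx]
    · rw [hpI, hx, max_eq_left hpos.le]
      constructor
      · intro h; exfalso; linarith
      · intro h; exfalso; nlinarith [mul_pos hd (mul_pos hb ha1)]
  · have hx : Dmax/(2*d) - b*a1/2 + pw*(α+a1)/2 + pc*(β+a2)/2 = 0 := by
      have : pc*(β+a2) = b*a1 - Dmax/d - pw*(α+a1) := by linarith
      rw [this]; field_simp; ring
    have hle : 5*Dmax/(6*d) - b*a1/6 ≤ 0 := by
      rw [sub_nonpos, div_le_div_iff₀ (by positivity) (by norm_num)]
      nlinarith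
    constructor
    · rw [hpI, hx, max_eq_right hle, max_self]
    · rw [hpI, hx, max_self]; exact ⟨fun _ => hge, fun _ => rfl⟩
end

section
/- If d·b·a1 < 5·D_max, then at the subgame perfect Nash equilibrium of the push model the demand is D_push = D_max/6 + d·b·a1/6, the IoTSP's payoff is U_I = d·(D_max/(6d) + b·a1/6)^2, and both the WSP's and CSP's payoffs equal 2d·(D_max/(6d) + b·a1/6)^2; in particular, the WSP and CSP each earn exactly twice the IoTSP's payoff. -/
/-- Push model, low advertisement revenue regime: equilibrium demand and payoffs. -/
theorem push_payoffs_low_ad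
    (Dmax d b a1 α β a2 pw pc pIstar D : ℝ)
    (hDmax : 0 < Dmax) (hd : 0 < d) (hb : 0 < b) (ha1 : 0 < a1)
    (hα : 0 < α) (hβ : 0 < β) (ha2 : 0 < a2)
    (hlow : d * b * a1 < 5 * Dmax)
    (hw : pw * (α+a1) = Dmax/(3*d) + b*a1/3)
    (hc : pc * (β+a2) = Dmax/(3*d) + b*a1/3)
    (hpI : pIstar = 5*Dmax/(6*d) - b*a1/6)
    (hD : D = max (Dmax - d * pIstar) 0) :
    D = Dmax/6 + d*b*a1/6 ∧
    D * (pIstar + b*a1 - pw*(α+a1) - pc*(β+a2)) = d * (Dmax/(6*d) + b*a1/6)^2 ∧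
    pw * (α+a1) * D = 2*d * (Dmax/(6*d) + b*a1/6)^2 ∧
    pc * (β+a2) * D = 2*d * (Dmax/(6*d) + b*a1/6)^2 ∧
    pw * (α+a1) * D = 2 * (D * (pIstar + b*a1 - pw*(α+a1) - pc*(β+a2))) ∧
    pc * (β+a2) * D = 2 * (D * (pIstar + b*a1 - pw*(α+a1) - pc*(β+a2))) := by
  have hd' : d ≠ 0 := ne_of_gt hd
  have hDval : D = Dmax/6 + d*b*a1/6 := by
    rw [hD, hpI]
    rw [max_eq_left]
    · field_simp; ring
    · have : d * (5*Dmax/(6*d) - b*a1/6) = 5*Dmax/6 - d*(b*a1)/6 := by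
        field_simp
      rw [this]
      nlinarith [mul_pos (mul_pos hd hb) ha1]
  refine ⟨hDval, ?_, ?_, ?_, ?_, ?_⟩ <;>
    simp only [hDval, hpI, hw, hc] <;> field_simp <;> ring
end

section
/- If d·b·a1 ≤ D_max/3, then at the Nash equilibrium of the pull model the demand is D_pull = D_max/4 + d·b·a1/4 and the payoffs of the IoTSP, WSP and CSP are all equal to d·(D_max/(4d) + b·a1/4)². -/
/-- Pull model, low advertisement revenue regime: equilibrium demand and payoffs. -/
theorem pull_payoffs_low_ad
    (Dmax d b a1 α β a2 pI pw pc D : ℝ)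
    (hDmax : 0 < Dmax) (hd : 0 < d) (hb : 0 < b) (ha1 : 0 < a1)
    (hα : 0 < α) (hβ : 0 < β) (ha2 : 0 < a2)
    (hlow : d * b * a1 ≤ Dmax/3)
    (hpI : pI = Dmax/(4*d) - 3*b*a1/4)
    (hw : pw * (α+a1) = Dmax/(4*d) + b*a1/4)
    (hc : pc * (β+a2) = Dmax/(4*d) + b*a1/4)
    (hD : D = max (Dmax - d * (pI + pw*(α+a1) + pc*(β+a2))) 0) :
    D = Dmax/4 + d*b*a1/4 ∧
    (pI + b*a1) * D = d * (Dmax/(4*d) + b*a1/4)^2 ∧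
    pw * (α+a1) * D = d * (Dmax/(4*d) + b*a1/4)^2 ∧
    pc * (β+a2) * D = d * (Dmax/(4*d) + b*a1/4)^2 := by
  have hd' : d ≠ 0 := ne_of_gt hd
  have hkey : Dmax - d * (pI + pw*(α+a1) + pc*(β+a2)) = Dmax/4 + d*b*a1/4 := by
    rw [hpI, hw, hc]; field_simp; ring
  have hpos : (0:ℝ) ≤ Dmax/4 + d*b*a1/4 := by positivity
  have hDval : D = Dmax/4 + d*b*a1/4 := by
    rw [hD, hkey, max_eq_left hpos]
  refine ⟨hDval, ?_, ?_, ?_⟩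
  · rw [hDval, hpI]; field_simp; ring
  · rw [hDval, hw]; field_simp
  · rw [hDval, hc]; field_simp
end

section
/- In the hybrid model, the CSP's unique subgame-perfect equilibrium price satisfies pc*·(β+a2) = b·a1/2 + D_max/(2d) when d·b·a1 < 2·D_max, and pc*·(β+a2) = b·a1 − D_max/(2d) when d·b·a1 ≥ 2·D_max. -/
/-- Hybrid model, sub-game 1: the CSP's unique subgame-perfect equilibrium price. -/
theorem hybrid_subgame1_csp_price
    (Dmax d b a1 α β a2 : ℝ)
    (hDmax : 0 < Dmax) (hd : 0 < d) (hb : 0 < b) (ha1 : 0 < a1)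
    (hα : 0 < α) (hβ : 0 < β) (ha2 : 0 < a2)
    (D : ℝ → ℝ)
    (hD1 : ∀ pc, b*a1 - Dmax/(2*d) < pc*(β+a2) →
      D pc = max (Dmax/3 + d*(b*a1 - pc*(β+a2))/3) 0)
    (hD2 : ∀ pc, pc*(β+a2) ≤ b*a1 - Dmax/(2*d) → D pc = Dmax/2)
    (Uc : ℝ → ℝ)
    (hUc : ∀ pc, Uc pc = pc * (β+a2) * D pc) :
    (d * b * a1 < 2 * Dmax →
      ∀ pc, 0 ≤ pc →
        ((∀ pc', 0 ≤ pc' → Uc pc' ≤ Uc pc) ↔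
          pc * (β+a2) = b*a1/2 + Dmax/(2*d))) ∧
    (2 * Dmax ≤ d * b * a1 →
      ∀ pc, 0 ≤ pc →
        ((∀ pc', 0 ≤ pc' → Uc pc' ≤ Uc pc) ↔
          pc * (β+a2) = b*a1 - Dmax/(2*d))) := by
  have hk : 0 < β + a2 := by linarith
  have hba : 0 < b * a1 := mul_pos hb ha1
  obtain ⟨m, hm, rfl⟩ : ∃ m, 0 < m ∧ Dmax = 2*d*m :=
    ⟨Dmax/(2*d), by positivity, by field_simp⟩
  have hdiv : 2*d*m/(2*d) = m := by field_simp
  rw [hdiv] at hD1 hD2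
  simp only [hdiv]
  constructor
  · -- case d*b*a1 < 4*d*m
    intro hcase pc hpc
    have hs4 : b*a1 < 4*m :=
      lt_of_mul_lt_mul_left (a := d) (by linarith) hd.le
    have hval : ∀ q : ℝ, q*(β+a2) = b*a1/2 + m → Uc q = d*(b*a1/2+m)^2/3 := by
      intro q hq
      have hgt : b*a1 - m < q*(β+a2) := by rw [hq]; linarith
      rw [hUc, hD1 q hgt, hq, max_eq_left (by nlinarith [mul_pos hd hm, mul_pos hd hba])]
      ring
    have hlt : ∀ q : ℝ, 0 ≤ q → q*(β+a2) ≠ b*a1/2 + m → Uc q < d*(b*a1/2+m)^2/3 := by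
      intro q hq hne
      have hx : 0 ≤ q*(β+a2) := mul_nonneg hq hk.le
      rcases le_or_gt (q*(β+a2)) (b*a1 - m) with hle | hgt
      · rw [hUc, hD2 q hle]
        nlinarith [mul_pos hd (mul_pos (show (0:ℝ) < 4*m - b*a1 by linarith)
            (show (0:ℝ) < 4*m - b*a1 by linarith)),
          mul_nonneg (mul_nonneg hd.le hm.le)
            (show (0:ℝ) ≤ b*a1 - m - q*(β+a2) by linarith)]
      · rw [hUc, hD1 q hgt]
        rcases le_or_gt (2*d*m/3 + d*(b*a1 - q*(β+a2))/3) 0 with h0 | h0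
        · rw [max_eq_right h0, mul_zero]
          nlinarith [mul_pos hd (mul_pos hm hm), mul_pos (mul_pos hd hm) hba,
            mul_pos hd (mul_pos hba hba)]
        · rw [max_eq_left h0.le]
          have hne' : q*(β+a2) - (b*a1/2+m) ≠ 0 := sub_ne_zero.2 hne
          nlinarith [mul_pos hd (mul_self_pos.2 hne'), hx]
    constructor
    · intro hmaxx
      by_contra hne
      have h1 := hlt pc hpc hne
      have h0 : (0:ℝ) ≤ (b*a1/2+m)/(β+a2) := div_nonneg (by linarith) hk.le
      have h2 := hmaxx _ h0
      rw [hval _ (div_mul_cancel₀ _ hk.ne')] at h2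
      linarith
    · intro hpceq q hq
      rcases eq_or_ne (q*(β+a2)) (b*a1/2+m) with he | hne
      · rw [hval q he, hval pc hpceq]
      · have := hlt q hq hne
        rw [hval pc hpceq]
        linarith
  · -- case 4*d*m ≤ d*b*a1
    intro hcase pc hpc
    have hs4 : 4*m ≤ b*a1 :=
      le_of_mul_le_mul_left (by linarith) hd
    have hval : ∀ q : ℝ, q*(β+a2) = b*a1 - m → Uc q = (b*a1-m)*(d*m) := by
      intro q hq
      rw [hUc, hD2 q (le_of_eq hq), hq]
      ring
    have hlt : ∀ q : ℝ, 0 ≤ q → q*(β+a2) ≠ b*a1 - m → Uc q < (b*a1-m)*(d*m) := by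
      intro q hq hne
      have hx : 0 ≤ q*(β+a2) := mul_nonneg hq hk.le
      rcases le_or_gt (q*(β+a2)) (b*a1 - m) with hle | hgt
      · rw [hUc, hD2 q hle]
        have hx' : 0 < b*a1 - m - q*(β+a2) :=
          sub_pos.2 (lt_of_le_of_ne hle hne)
        nlinarith [mul_pos (mul_pos hd hm) hx']
      · rw [hUc, hD1 q hgt]
        rcases le_or_gt (2*d*m/3 + d*(b*a1 - q*(β+a2))/3) 0 with h0 | h0
        · rw [max_eq_right h0, mul_zero]
          nlinarith [mul_pos (mul_pos hd hm) (show (0:ℝ) < b*a1 - m by linarith)]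
        · rw [max_eq_left h0.le]
          nlinarith [mul_pos hd (mul_pos (show (0:ℝ) < q*(β+a2) - (b*a1 - m) by linarith)
            (show (0:ℝ) < q*(β+a2) - 3*m by linarith))]
    constructor
    · intro hmaxx
      by_contra hne
      have h1 := hlt pc hpc hne
      have h0 : (0:ℝ) ≤ (b*a1-m)/(β+a2) := div_nonneg (by linarith) hk.le
      have h2 := hmaxx _ h0
      rw [hval _ (div_mul_cancel₀ _ hk.ne')] at h2
      linarith
    · intro hpceq q hq
      rcases eq_or_ne (q*(β+a2)) (b*a1-m) with he | hne
      · rw [hval q he, hval pc hpceq]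
      · have := hlt q hq hne
        rw [hval pc hpceq]
        linarith
end

section
/- If d·b·a1 < 2·D_max, then at the SPNE of the hybrid model the demand is D_hybrid = D_max/6 + d·b·a1/6, the IoTSP's and WSP's payoffs are each d·(D_max/(6d) + b·a1/6)², and the CSP's payoff is 3d·(D_max/(6d) + b·a1/6)², i.e. three times each of the others' payoffs. -/
/-- Hybrid model, low advertisement revenue regime: SPNE demand and payoffs. -/
theorem hybrid_payoffs_low_ad
    (Dmax d b a1 α β a2 pI pw pc D : ℝ)
    (hDmax : 0 < Dmax) (hd : 0 < d) (hb : 0 < b) (ha1 : 0 < a1)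
    (hα : 0 < α) (hβ : 0 < β) (ha2 : 0 < a2)
    (hlow : d * b * a1 < 2 * Dmax)
    (hpI : pI = 2*Dmax/(3*d) - b*a1/3)
    (hw : pw * (α+a1) = Dmax/(6*d) + b*a1/6)
    (hc : pc * (β+a2) = b*a1/2 + Dmax/(2*d))
    (hD : D = max (Dmax - d * (pI + pw*(α+a1))) 0) :
    D = Dmax/6 + d*b*a1/6 ∧
    D * (pI - pc*(β+a2) + b*a1) = d * (Dmax/(6*d) + b*a1/6)^2 ∧
    pw * (α+a1) * D = d * (Dmax/(6*d) + b*a1/6)^2 ∧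
    pc * (β+a2) * D = 3*d * (Dmax/(6*d) + b*a1/6)^2 ∧
    pc * (β+a2) * D = 3 * (D * (pI - pc*(β+a2) + b*a1)) ∧
    pc * (β+a2) * D = 3 * (pw * (α+a1) * D) := by
  have hd0 : d ≠ 0 := ne_of_gt hd
  have hkey : Dmax - d * (pI + pw*(α+a1)) = Dmax/6 + d*b*a1/6 := by
    rw [hpI, hw]
    field_simp
    ring
  have hD' : D = Dmax/6 + d*b*a1/6 := by
    rw [hD, hkey, max_eq_left]
    positivity
  refine ⟨hD', ?_, ?_, ?_, ?_, ?_⟩ <;>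
    simp only [hD', hpI, hw, hc] <;> field_simp <;> ring
end

section
/- Let D_push(x) = D_max/6 + x/6 for x < 5D_max, D_push(x) = D_max for x ≥ 5D_max; D_pull(x) = D_max/4 + x/4 for x ≤ D_max/3, D_pull(x) = D_max/3 for x > D_max/3; D_hybrid(x) = D_max/6 + x/6 for x < 2D_max, D_hybrid(x) = D_max/2 for x ≥ 2D_max, where x = d·b·a1 ≥ 0. Then: D_pull(x) > D_push(x) = D_hybrid(x) for x < D_max; all three are equal at x = D_max; D_push(x) = D_hybrid(x) > D_pull(x) for D_max < x ≤ 2D_max; and D_push(x) > D_hybrid(x) > D_pull(x) for x > 2D_max. -/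
/-- Comparison of equilibrium demands across the push, pull and hybrid models,
as functions of the scaled advertisement revenue x = d·b·a1. -/
theorem demand_comparison
    (Dmax : ℝ) (hDmax : 0 < Dmax)
    (Dpush Dpull Dhybrid : ℝ → ℝ)
    (hpush : ∀ x, Dpush x = if x < 5*Dmax then Dmax/6 + x/6 else Dmax)
    (hpull : ∀ x, Dpull x = if x ≤ Dmax/3 then Dmax/4 + x/4 else Dmax/3)
    (hhybrid : ∀ x, Dhybrid x = if x < 2*Dmax then Dmax/6 + x/6 else Dmax/2) :
    ∀ x, 0 ≤ x →
      (x < Dmax → Dpush x < Dpull x ∧ Dpush x = Dhybrid x) ∧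
      (x = Dmax → Dpull x = Dpush x ∧ Dpush x = Dhybrid x) ∧
      (Dmax < x ∧ x ≤ 2*Dmax → Dpush x = Dhybrid x ∧ Dpull x < Dhybrid x) ∧
      (2*Dmax < x → Dhybrid x < Dpush x ∧ Dpull x < Dhybrid x) := by
  intro x hx
  rw [hpush, hpull, hhybrid]
  refine ⟨fun h => ?_, fun h => ?_, fun h => ?_, fun h => ?_⟩ <;>
    split_ifs <;> constructor <;> linarith
end

section
/- Let x = d·b·a1 ≥ 0 and define the equilibrium IoTSP payoffs (scaled by d): U_push(x) = ((D_max + x)/6)² for x < 5D_max and U_push(x) = D_max² for x ≥ 5D_max; U_pull(x) = ((D_max + x)/4)² for x ≤ D_max/3 and U_pull(x) = x·D_max/3 for x > D_max/3; U_hybrid(x) = ((D_max + x)/6)² for x < 2D_max and U_hybrid(x) = D_max²/4 for x ≥ 2D_max. Then for all x ≥ 0: U_pull(x) > U_push(x) ≥ U_hybrid(x), with U_push(x) = U_hybrid(x) exactly when x ≤ 2D_max. -/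
/-!
The push and hybrid payoffs are the same parabola `t ↦ ((D + t) / 6) ^ 2`, evaluated at `x` capped
at `5 D` and at `2 D` respectively: their constant branches `D ^ 2` and `D ^ 2 / 4` are the values
of the parabola at the caps. The parabola is strictly increasing for `t ≥ -D`, so the hybrid payoff
is the smaller one, with equality exactly when the cap `2 D` is inactive, i.e. `x ≤ 2 D`.
The pull payoff beats the push payoff because below `D / 3` it is the steeper parabola
`((D + x) / 4) ^ 2`, and above `D / 3` the line `t D / 3` lies strictly above `((D + t) / 6) ^ 2`
on the whole range `(D / 3, 5 D]` of the capped argument.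
-/

theorem ite_lt_apply_eq_apply_min {α β : Type*} [LinearOrder α] (f : α → β) (x c : α) :
    (if x < c then f x else f c) = f (min x c) := by
  rcases lt_or_ge x c with h | h
  · rw [if_pos h, min_eq_left h.le]
  · rw [if_neg h.not_gt, min_eq_right h]

theorem min_eq_min_iff_le {α : Type*} [LinearOrder α] {a b x : α} (hab : a < b) :
    min x b = min x a ↔ x ≤ a := by
  constructor
  · intro h
    by_contra! hax
    have : a < min x b := lt_min hax hab
    exact this.ne' (h.trans (min_eq_right hax.le))
  · intro hxa
    rw [min_eq_left hxa, min_eq_left (hxa.trans hab.le)]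

section Payoffs

variable {D x : ℝ}

theorem push_payoff_eq_capped :
    (if x < 5 * D then ((D + x) / 6) ^ 2 else D ^ 2) = ((D + min x (5 * D)) / 6) ^ 2 := by
  convert ite_lt_apply_eq_apply_min (fun t => ((D + t) / 6) ^ 2) x (5 * D) using 2
  ring

theorem hybrid_payoff_eq_capped :
    (if x < 2 * D then ((D + x) / 6) ^ 2 else D ^ 2 / 4) = ((D + min x (2 * D)) / 6) ^ 2 := by
  convert ite_lt_apply_eq_apply_min (fun t => ((D + t) / 6) ^ 2) x (2 * D) using 2
  ring

theorem sq_add_div_six_lt_mul_div_three {t : ℝ} (hD : 0 < D) (hlo : D / 3 < t) (hhi : t ≤ 5 * D) :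
    ((D + t) / 6) ^ 2 < t * D / 3 := by
  nlinarith

theorem capped_lt_pull_payoff (hD : 0 < D) (hx : 0 ≤ x) :
    ((D + min x (5 * D)) / 6) ^ 2 < if x ≤ D / 3 then ((D + x) / 4) ^ 2 else x * D / 3 := by
  have hcap : min x (5 * D) ≤ x := min_le_left _ _
  split_ifs with hsmall
  · calc ((D + min x (5 * D)) / 6) ^ 2 ≤ ((D + x) / 6) ^ 2 := by gcongr
      _ < ((D + x) / 4) ^ 2 := by gcongr; norm_num
  · calc ((D + min x (5 * D)) / 6) ^ 2 < min x (5 * D) * D / 3 :=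
          sq_add_div_six_lt_mul_div_three hD (lt_min (not_le.mp hsmall) (by linarith)) (min_le_right _ _)
      _ ≤ x * D / 3 := by gcongr

end Payoffs

/-- Comparison of the IoTSP's equilibrium payoff (scaled by d) across the push,
pull and hybrid models, as functions of x = d·b·a1. -/
theorem iot_payoff_comparison
    (Dmax : ℝ) (hDmax : 0 < Dmax)
    (Upush Upull Uhybrid : ℝ → ℝ)
    (hpush : ∀ x, Upush x = if x < 5*Dmax then ((Dmax + x)/6)^2 else Dmax^2)
    (hpull : ∀ x, Upull x = if x ≤ Dmax/3 then ((Dmax + x)/4)^2 else x*Dmax/3)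
    (hhybrid : ∀ x, Uhybrid x = if x < 2*Dmax then ((Dmax + x)/6)^2 else Dmax^2/4) :
    ∀ x, 0 ≤ x →
      Upush x < Upull x ∧
      Uhybrid x ≤ Upush x ∧
      (Upush x = Uhybrid x ↔ x ≤ 2*Dmax) := by
  intro x hx
  have hcaps : 2 * Dmax < 5 * Dmax := by linarith
  have hlow : 0 ≤ (Dmax + min x (2 * Dmax)) / 6 := by
    have := le_min hx (by linarith : 0 ≤ 2 * Dmax)
    positivity
  have hhigh : 0 ≤ (Dmax + min x (5 * Dmax)) / 6 := by
    have := le_min hx (by linarith : 0 ≤ 5 * Dmax)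
    positivity
  rw [hpush, hpull, hhybrid, push_payoff_eq_capped, hybrid_payoff_eq_capped]
  refine ⟨capped_lt_pull_payoff hDmax hx, ?_, ?_⟩
  · gcongr
  · rw [sq_eq_sq₀ hhigh hlow, div_left_inj' (by norm_num), add_right_inj]
    exact min_eq_min_iff_le hcaps
end

section
/- Let x = d·b·a1 and define scaled CSP payoffs: C_hybrid(x) = 3·((D_max + x)/6)² for x < 2D_max and C_hybrid(x) = (x − D_max/2)·D_max/2 for x ≥ 2D_max; C_push(x) = 2·((D_max + x)/6)² for x < 5D_max, with best-case payoff C_push_best(x) = (x − 3D_max)·D_max and worst-case payoff C_push_worst(x) = 2D_max² for x ≥ 5D_max. Then C_hybrid(x) > C_push(x) for all x < 5D_max; C_hybrid(x) > C_push_worst(x) for x ≥ 5D_max; C_hybrid(x) > C_push_best(x) for 5D_max ≤ x < 5.5D_max; C_hybrid(x) = C_push_best(x) at x = 5.5D_max; and C_push_best(x) > C_hybrid(x) for x > 5.5D_max. -/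
/-- Comparison of the CSP's equilibrium payoff (scaled by d) in the hybrid versus
push models; for x ≥ 5·D_max the push equilibrium is non-unique, so best- and
worst-case payoffs are used. -/
theorem csp_payoff_comparison
    (Dmax : ℝ) (hDmax : 0 < Dmax)
    (Chybrid : ℝ → ℝ)
    (hhybrid : ∀ x, Chybrid x =
      if x < 2*Dmax then 3*((Dmax + x)/6)^2 else (x - Dmax/2)*Dmax/2) :
    ∀ x, 0 ≤ x →
      (x < 5*Dmax → 2*((Dmax + x)/6)^2 < Chybrid x) ∧
      (5*Dmax ≤ x → 2*Dmax^2 < Chybrid x) ∧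
      (5*Dmax ≤ x ∧ x < 11*Dmax/2 → (x - 3*Dmax)*Dmax < Chybrid x) ∧
      (x = 11*Dmax/2 → Chybrid x = (x - 3*Dmax)*Dmax) ∧
      (11*Dmax/2 < x → Chybrid x < (x - 3*Dmax)*Dmax) := by
  intro x hx
  rw [hhybrid x]
  by_cases h : x < 2*Dmax
  · rw [if_pos h]
    refine ⟨fun _ => by nlinarith, fun h5 => by nlinarith, fun ⟨h5, _⟩ => by nlinarith,
      fun he => by nlinarith [he], fun h5 => by nlinarith⟩
  · rw [if_neg h]
    push_neg at h
    refine ⟨fun h5 => by nlinarith [mul_nonneg (sub_nonneg.2 h) (sub_nonneg.2 h5.le)],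
      fun h5 => by nlinarith, fun ⟨h5, h55⟩ => by nlinarith,
      fun he => by rw [he]; ring, fun h5 => by nlinarith⟩
end
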